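/- Front spinning preserves the Lagrangian condition (part of Proposition 1.4): let n ≥ 1, let E be a real normed vector space, and let g : E → ℝ × ℝ^{2n+1} have differentiable component functions t, x_1, y_1, …, x_n, y_n, z such that the pullback of ω_n under g vanishes, i.e., ω_n at g(p) evaluated on (Dg(p)(v), Dg(p)(w)) is 0 for all p ∈ E and v, w ∈ E. Then the pullback of ω_{n+1} under the front-spun map Σg vanishes: ω_{n+1} at Σg(p,θ) evaluated on (D(Σg)(p,θ)(v,s), D(Σg)(p,θ)(w,r)) is 0 for all (p,θ) ∈ E × ℝ and all (v,s), (w,r) ∈ E × ℝ. -/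

import Mathlib

/-!
Front spinning preserves the Lagrangian condition.

Coordinates on `ℝ × ℝ^{2n+1}` are `(t, x_1, y_1, …, x_n, y_n, z)`; a map
`g : E → ℝ × ℝ^{2n+1}` is given by its component functions
`t, x_1, y_1, …, x_n, y_n, z : E → ℝ`.

The front spinning `Σg : E × ℝ → ℝ × ℝ^{2n+3}` has component functions
`T = t`, `X_0 = x_1 sin θ`, `Y_0 = y_1 sin θ`, `X_1 = x_1 cos θ`,
`Y_1 = y_1 cos θ`, `X_i = x_i`, `Y_i = y_i` for `i ≥ 2`, and `Z = z`.

The symplectization form `ω = d(e^t α)` at a point `q`, on a pair of vectors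
`(u, v)`, is `e^{t(q)}·[u_t·(v_z − Σ y_i(q) v_{x_i}) − v_t·(u_z − Σ y_i(q) u_{x_i})
− Σ (u_{y_i} v_{x_i} − v_{y_i} u_{x_i})]`; its pullback under a parametrization
with component functions `t, x_i, y_i, z` evaluated on tangent vectors `u, v`
at `p` is `sympPull` below (the index set `S` is `{1, …, n}` for `ω_n` and
`{0, …, n}` for `ω_{n+1}`). A parametrization is Lagrangian when this pullback
vanishes identically.
-/

/-- The `x`-component functions of the front-spun map. -/
noncomputable def spinX {E : Type*} (x : ℕ → E → ℝ) : ℕ → E × ℝ → ℝ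
  | 0 => fun q => x 1 q.1 * Real.sin q.2
  | 1 => fun q => x 1 q.1 * Real.cos q.2
  | (i + 2) => fun q => x (i + 2) q.1

/-- The `y`-component functions of the front-spun map. -/
noncomputable def spinY {E : Type*} (y : ℕ → E → ℝ) : ℕ → E × ℝ → ℝ
  | 0 => fun q => y 1 q.1 * Real.sin q.2
  | 1 => fun q => y 1 q.1 * Real.cos q.2
  | (i + 2) => fun q => y (i + 2) q.1

/-- The `z`-component function of the front-spun map. -/
def spinZ {E : Type*} (z : E → ℝ) : E × ℝ → ℝ := fun q => z q.1

/-- The `t`-component function of the front-spun cobordism. -/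
def spinT {E : Type*} (t : E → ℝ) : E × ℝ → ℝ := fun q => t q.1

/-- The pullback of the symplectization form `ω = d(e^t α)` under the
parametrization with component functions `t, x_i, y_i (i ∈ S), z`, evaluated
at the point `p` on the pair of tangent vectors `(u, v)`. -/
noncomputable def sympPull {F : Type*} [NormedAddCommGroup F] [NormedSpace ℝ F]
    (S : Finset ℕ) (t : F → ℝ) (x y : ℕ → F → ℝ) (z : F → ℝ) (p : F) (u v : F) : ℝ :=
  Real.exp (t p) *
    (fderiv ℝ t p u * (fderiv ℝ z p v - ∑ i ∈ S, y i p * fderiv ℝ (x i) p v) -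
      fderiv ℝ t p v * (fderiv ℝ z p u - ∑ i ∈ S, y i p * fderiv ℝ (x i) p u) -
      ∑ i ∈ S, (fderiv ℝ (y i) p u * fderiv ℝ (x i) p v -
        fderiv ℝ (y i) p v * fderiv ℝ (x i) p u))

/-!
Spinning replaces the coordinate pair `(x_1, y_1)` by the two pairs `x_1 (sin θ, cos θ)` and
`y_1 (sin θ, cos θ)`. Because `sin² θ + cos² θ = 1`, the Liouville terms `y_0 dx_0 + y_1 dx_1`
of `Σg` collapse to `y_1 dx_1`, and the `dθ`-contributions to `dy_0 ∧ dx_0 + dy_1 ∧ dx_1` cancel,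
leaving `dy_1 ∧ dx_1`. Hence the pullback of `ω_{n+1}` under `Σg` at `(p, θ)` is the pullback of
`ω_n` under `g` at `p`, evaluated on the `E`-components of the tangent vectors.
-/

open Finset Real

theorem Finset.sum_Icc_zero_eq_sum_Icc_one {M : Type*} [AddCommMonoid M] {n : ℕ} (hn : 1 ≤ n)
    {f g : ℕ → M} (h01 : f 0 + f 1 = g 1) (h : ∀ i ∈ Ioc 1 n, f i = g i) :
    ∑ i ∈ Icc 0 n, f i = ∑ i ∈ Icc 1 n, g i := by
  rw [← add_sum_Ioc_eq_sum_Icc n.zero_le, ← Icc_add_one_left_eq_Ioc, zero_add,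
    ← add_sum_Ioc_eq_sum_Icc hn, ← add_sum_Ioc_eq_sum_Icc hn, sum_congr rfl h, ← add_assoc, h01]

section FDeriv

variable {𝕜 E F G : Type*} [NontriviallyNormedField 𝕜] [NormedAddCommGroup E] [NormedSpace 𝕜 E]
  [NormedAddCommGroup F] [NormedSpace 𝕜 F] [NormedAddCommGroup G] [NormedSpace 𝕜 G]

theorem fderiv_comp_fst_apply {f : E → G} {p : E} (hf : DifferentiableAt 𝕜 f p) (θ : F)
    (v : E) (s : F) :
    fderiv 𝕜 (fun q : E × F => f q.1) (p, θ) (v, s) = fderiv 𝕜 f p v := by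
  have h : HasFDerivAt (fun q : E × F => f q.1) ((fderiv 𝕜 f p).comp (.fst 𝕜 E F)) (p, θ) :=
    hf.hasFDerivAt.comp (p, θ) hasFDerivAt_fst
  rw [h.fderiv]
  rfl

theorem fderiv_mul_comp_snd_apply {f : E → 𝕜} {g : 𝕜 → 𝕜} {p : E} {θ g' : 𝕜}
    (hf : DifferentiableAt 𝕜 f p) (hg : HasDerivAt g g' θ) (v : E) (s : 𝕜) :
    fderiv 𝕜 (fun q : E × 𝕜 => f q.1 * g q.2) (p, θ) (v, s) =
      fderiv 𝕜 f p v * g θ + f p * (g' * s) := by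
  have hf' : HasFDerivAt (fun q : E × 𝕜 => f q.1) ((fderiv 𝕜 f p).comp (.fst 𝕜 E 𝕜)) (p, θ) :=
    hf.hasFDerivAt.comp (p, θ) hasFDerivAt_fst
  have hg' : HasFDerivAt (fun q : E × 𝕜 => g q.2) (g' • .snd 𝕜 E 𝕜) (p, θ) :=
    hg.comp_hasFDerivAt (p, θ) hasFDerivAt_snd
  rw [(show HasFDerivAt (fun q : E × 𝕜 => f q.1 * g q.2) _ (p, θ) from hf'.mul hg').fderiv]
  simp [mul_comm, add_comm]

end FDeriv

section Spin

variable {E : Type*}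

theorem spinY_eq_spinX (y : ℕ → E → ℝ) : spinY y = spinX y := by
  funext i
  rcases i with _ | _ | i <;> rfl

theorem spinX_of_two_le (x : ℕ → E → ℝ) {i : ℕ} (hi : 2 ≤ i) :
    spinX x i = fun q => x i q.1 := by
  obtain ⟨k, rfl⟩ := Nat.exists_eq_add_of_le' hi
  rfl

variable [NormedAddCommGroup E] [NormedSpace ℝ E] {x y : ℕ → E → ℝ} {p : E} {θ : ℝ}

theorem fderiv_spinX_zero (hx : DifferentiableAt ℝ (x 1) p) (v : E) (s : ℝ) :
    fderiv ℝ (spinX x 0) (p, θ) (v, s) = fderiv ℝ (x 1) p v * sin θ + x 1 p * (cos θ * s) :=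
  fderiv_mul_comp_snd_apply hx (hasDerivAt_sin θ) v s

theorem fderiv_spinX_one (hx : DifferentiableAt ℝ (x 1) p) (v : E) (s : ℝ) :
    fderiv ℝ (spinX x 1) (p, θ) (v, s) = fderiv ℝ (x 1) p v * cos θ + x 1 p * (-sin θ * s) :=
  fderiv_mul_comp_snd_apply hx (hasDerivAt_cos θ) v s

theorem fderiv_spinX_of_two_le {i : ℕ} (hi : 2 ≤ i) (hx : DifferentiableAt ℝ (x i) p)
    (v : E) (s : ℝ) :
    fderiv ℝ (spinX x i) (p, θ) (v, s) = fderiv ℝ (x i) p v := by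
  rw [spinX_of_two_le x hi, fderiv_comp_fst_apply hx]

theorem sum_spinY_mul_fderiv_spinX {n : ℕ} (hn : 1 ≤ n)
    (hx : ∀ i ∈ Icc 1 n, DifferentiableAt ℝ (x i) p) (v : E) (s : ℝ) :
    ∑ i ∈ Icc 0 n, spinY y i (p, θ) * fderiv ℝ (spinX x i) (p, θ) (v, s) =
      ∑ i ∈ Icc 1 n, y i p * fderiv ℝ (x i) p v := by
  have hx1 := hx 1 (left_mem_Icc.2 hn)
  refine sum_Icc_zero_eq_sum_Icc_one hn ?_ fun i hi => ?_
  · simp only [spinY, fderiv_spinX_zero hx1, fderiv_spinX_one hx1]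
    linear_combination (y 1 p * fderiv ℝ (x 1) p v) * sin_sq_add_cos_sq θ
  · have hi2 : 2 ≤ i := (mem_Ioc.1 hi).1
    rw [spinY_eq_spinX, spinX_of_two_le y hi2,
      fderiv_spinX_of_two_le hi2 (hx i (Ioc_subset_Icc_self hi))]

theorem sum_wedge_fderiv_spin {n : ℕ} (hn : 1 ≤ n)
    (hx : ∀ i ∈ Icc 1 n, DifferentiableAt ℝ (x i) p)
    (hy : ∀ i ∈ Icc 1 n, DifferentiableAt ℝ (y i) p) (v w : E) (s r : ℝ) :
    ∑ i ∈ Icc 0 n, (fderiv ℝ (spinY y i) (p, θ) (v, s) * fderiv ℝ (spinX x i) (p, θ) (w, r) -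
        fderiv ℝ (spinY y i) (p, θ) (w, r) * fderiv ℝ (spinX x i) (p, θ) (v, s)) =
      ∑ i ∈ Icc 1 n, (fderiv ℝ (y i) p v * fderiv ℝ (x i) p w -
        fderiv ℝ (y i) p w * fderiv ℝ (x i) p v) := by
  have hx1 := hx 1 (left_mem_Icc.2 hn)
  have hy1 := hy 1 (left_mem_Icc.2 hn)
  rw [spinY_eq_spinX]
  refine sum_Icc_zero_eq_sum_Icc_one hn ?_ fun i hi => ?_
  · simp only [fderiv_spinX_zero hx1, fderiv_spinX_one hx1, fderiv_spinX_zero hy1,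
      fderiv_spinX_one hy1]
    linear_combination (fderiv ℝ (y 1) p v * fderiv ℝ (x 1) p w -
      fderiv ℝ (y 1) p w * fderiv ℝ (x 1) p v) * sin_sq_add_cos_sq θ
  · have hi2 : 2 ≤ i := (mem_Ioc.1 hi).1
    have hiIcc := Ioc_subset_Icc_self hi
    simp only [fderiv_spinX_of_two_le hi2 (hx i hiIcc), fderiv_spinX_of_two_le hi2 (hy i hiIcc)]

theorem sympPull_spin {n : ℕ} (hn : 1 ≤ n) {t z : E → ℝ} (ht : DifferentiableAt ℝ t p)
    (hz : DifferentiableAt ℝ z p) (hx : ∀ i ∈ Icc 1 n, DifferentiableAt ℝ (x i) p)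
    (hy : ∀ i ∈ Icc 1 n, DifferentiableAt ℝ (y i) p) (v w : E) (s r : ℝ) :
    sympPull (Icc 0 n) (spinT t) (spinX x) (spinY y) (spinZ z) (p, θ) (v, s) (w, r) =
      sympPull (Icc 1 n) t x y z p v w := by
  unfold spinT spinZ
  simp only [sympPull, sum_spinY_mul_fderiv_spinX hn hx, sum_wedge_fderiv_spin hn hx hy,
    fderiv_comp_fst_apply ht, fderiv_comp_fst_apply hz]

end Spin

/-- **Front spinning preserves the Lagrangian condition.**
If `g : E → ℝ × ℝ^{2n+1}` has differentiable component functions and the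
pullback of `ω_n` under `g` vanishes, then the pullback of `ω_{n+1}` under
the front-spun map `Σg` vanishes. -/
theorem front_spinning_preserves_lagrangian
    {E : Type*} [NormedAddCommGroup E] [NormedSpace ℝ E]
    (n : ℕ) (hn : 1 ≤ n) (t : E → ℝ) (x y : ℕ → E → ℝ) (z : E → ℝ)
    (ht : Differentiable ℝ t)
    (hx : ∀ i ∈ Finset.Icc 1 n, Differentiable ℝ (x i))
    (hy : ∀ i ∈ Finset.Icc 1 n, Differentiable ℝ (y i))
    (hz : Differentiable ℝ z)
    (hlag : ∀ (p : E) (v w : E), sympPull (Finset.Icc 1 n) t x y z p v w = 0) :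
    ∀ (p : E) (θ : ℝ) (v w : E) (s r : ℝ),
      sympPull (Finset.Icc 0 n) (spinT t) (spinX x) (spinY y) (spinZ z)
        (p, θ) (v, s) (w, r) = 0 := by
  intro p θ v w s r
  rw [sympPull_spin hn (ht p) (hz p) (fun i hi => hx i hi p) (fun i hi => hy i hi p)]
  exact hlag p v w
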